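/- arXiv:1505.04697 — 3 statements merged into one kernel-verified Lean document; each statement's English description precedes it below -/
import Mathlib

section
/- (Proposition 2.) Under perfect matching, the rebar estimator is unbiased for the expected effect of the treatment on the treated: if P_i = P_j whenever m(i) = m(j), then E[τ̂_rebar] = τ_ETT. -/
/-!
Summing over matched sets is summing over subjects, and since `Z_i ∈ {0,1}` the residual
multiplying `Z_i` is `y_T(i) - ŷ_C(i)` while the one multiplying `1 - Z_i` is `y_C(i) - ŷ_C(i)`.
So the estimator is affine in `Z`, and its expectation is the same expression with `Z_i` replaced
by `P_i`. Under perfect matching `P_i` is constant on a matched set, which treats `n_T(s)` of its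
`n_T(s) + n_C(s)` members, so `P_i = n_T(s)/(n_T(s) + n_C(s))`. For this value both weights
`w_s P_i/n_T(s)` and `w_s (1 - P_i)/n_C(s)` equal `P_i/n_T`: the prediction `ŷ_C(i)` cancels and
subject `i` contributes `τ_i P_i/n_T`.
-/

open MeasureTheory Finset

noncomputable section

namespace Rebar

variable {n : ℕ} {S : Type*} [Fintype S] [DecidableEq S]

/-- The matched set with label `s`: subjects `i` with `m i = s`. -/
def mSet (m : Fin n → S) (s : S) : Finset (Fin n) :=
  Finset.univ.filter fun i => m i = s

/-- Matched-set difference `t_s(v, z)` for a vector `v` and assignment `z`. -/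
def tdiff (m : Fin n → S) (nT nC : S → ℕ) (v z : Fin n → ℝ) (s : S) : ℝ :=
  (1 / (nT s : ℝ)) * ∑ i ∈ mSet m s, v i * z i
    - (1 / (nC s : ℝ)) * ∑ i ∈ mSet m s, v i * (1 - z i)

/-- Total number treated, `n_T = Σ_s n_T(s)`. -/
def nTtot (nT : S → ℕ) : ℕ := ∑ s, nT s

/-- Matched-set weight `w_s = n_T(s)/n_T`. -/
def w (nT : S → ℕ) (s : S) : ℝ := (nT s : ℝ) / (nTtot nT : ℝ)

/-- The matching estimator `τ̂_M(v) = Σ_s w_s t_s(v, z)`. -/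
def tauM (m : Fin n → S) (nT nC : S → ℕ) (v z : Fin n → ℝ) : ℝ :=
  ∑ s, w nT s * tdiff m nT nC v z s

/-- Observed outcome `Y_i = Z_i y_T(i) + (1 - Z_i) y_C(i)`. -/
def Yobs (yT yC : Fin n → ℝ) (z : Fin n → ℝ) (i : Fin n) : ℝ :=
  z i * yT i + (1 - z i) * yC i

/-- Treatment-assignment probability `P_i = Pr(Z_i = 1)`. -/
def Pr {Ω : Type*} [MeasurableSpace Ω] (μ : Measure Ω) (Z : Ω → Fin n → ℝ)
    (i : Fin n) : ℝ :=
  (μ {ω | Z ω i = 1}).toReal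

/-- The estimand: expected effect of treatment on the treated,
`τ_ETT = (Σ_i τ_i P_i)/n_T`. -/
def tauETT {Ω : Type*} [MeasurableSpace Ω] (μ : Measure Ω) (Z : Ω → Fin n → ℝ)
    (yT yC : Fin n → ℝ) (nT : S → ℕ) : ℝ :=
  (∑ i, (yT i - yC i) * Pr μ Z i) / (nTtot nT : ℝ)

/-- The design constant `C(n, n_T, n_C)`. -/
def Cdesign (n : ℕ) (nT nC : S → ℕ) : ℝ :=
  ((n : ℝ) / (nTtot nT : ℝ) ^ 2) *
    ∑ s, ((nT s : ℝ) + (nC s : ℝ)) * (max 1 ((nT s : ℝ) / (nC s : ℝ))) ^ 2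

/-- Mean squared prediction error `MSE_M = (1/n) Σ_i (ŷ_C(i) - y_C(i))²`. -/
def MSE (yC yhat : Fin n → ℝ) : ℝ :=
  (1 / (n : ℝ)) * ∑ i, (yhat i - yC i) ^ 2

end Rebar

lemma indicator_eq_of_forall_eq_zero_or_one {Ω : Type*} {X : Ω → ℝ}
    (h01 : ∀ ω, X ω = 0 ∨ X ω = 1) : {ω | X ω = 1}.indicator 1 = X := by
  funext ω
  rcases h01 ω with h | h <;> simp [h]

section ZeroOne

variable {Ω : Type*} [MeasurableSpace Ω] {μ : Measure Ω} {X : Ω → ℝ}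

lemma integrable_of_forall_eq_zero_or_one [IsFiniteMeasure μ] (hX : Measurable X)
    (h01 : ∀ ω, X ω = 0 ∨ X ω = 1) : Integrable X μ := by
  rw [← indicator_eq_of_forall_eq_zero_or_one h01]
  exact (integrable_const 1).indicator (hX (measurableSet_singleton 1))

lemma integral_eq_measureReal_of_forall_eq_zero_or_one (hX : Measurable X)
    (h01 : ∀ ω, X ω = 0 ∨ X ω = 1) : ∫ ω, X ω ∂μ = μ.real {ω | X ω = 1} := by
  conv_lhs => rw [← indicator_eq_of_forall_eq_zero_or_one h01]
  rw [Pi.one_def, integral_indicator_const (1 : ℝ) (s := {ω | X ω = 1})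
    (hX (measurableSet_singleton 1)), smul_eq_mul, mul_one]

lemma integral_mul_sub_one_sub_mul [IsProbabilityMeasure μ] (hX : Integrable X μ) (u v : ℝ) :
    ∫ ω, (X ω * u - (1 - X ω) * v) ∂μ = (∫ ω, X ω ∂μ) * u - (1 - ∫ ω, X ω ∂μ) * v := by
  have hX' : Integrable (fun ω => 1 - X ω) μ := (integrable_const 1).sub hX
  rw [integral_sub (hX.mul_const u) (hX'.mul_const v),
    integral_mul_const, integral_mul_const, integral_sub (integrable_const 1) hX,
    integral_const, probReal_univ, one_smul]

end ZeroOne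

namespace Rebar

variable {n : ℕ} {S : Type*} [DecidableEq S] (m : Fin n → S) (nT nC : S → ℕ)

lemma tauM_eq_sum_subjects [Fintype S] (v z : Fin n → ℝ) :
    tauM m nT nC v z = ∑ i, (v i * z i * (w nT (m i) / nT (m i))
      - v i * (1 - z i) * (w nT (m i) / nC (m i))) := by
  rw [tauM, ← Finset.sum_fiberwise univ m]
  refine Finset.sum_congr rfl fun s _ => ?_
  rw [tdiff, mSet, mul_sub, mul_sum, mul_sum, mul_sum, mul_sum, ← sum_sub_distrib]
  refine Finset.sum_congr rfl fun i hi => ?_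
  rw [(mem_filter.1 hi).2]
  ring

lemma tauM_residual_eq [Fintype S] (yT yC yhat z : Fin n → ℝ) (hz : ∀ i, z i = 0 ∨ z i = 1) :
    tauM m nT nC (fun i => Yobs yT yC z i - yhat i) z
      = ∑ i, (z i * (w nT (m i) / nT (m i) * (yT i - yhat i))
        - (1 - z i) * (w nT (m i) / nC (m i) * (yC i - yhat i))) := by
  rw [tauM_eq_sum_subjects]
  refine Finset.sum_congr rfl fun i _ => ?_
  rcases hz i with h | h <;> simp only [Yobs, h] <;> ring

section Propensity

variable {Ω : Type*} [MeasurableSpace Ω] (μ : Measure Ω) {Z : Ω → Fin n → ℝ}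

lemma integral_eq_Pr (hZmeas : ∀ i, Measurable fun ω => Z ω i)
    (hZ01 : ∀ ω i, Z ω i = 0 ∨ Z ω i = 1) (i : Fin n) : ∫ ω, Z ω i ∂μ = Pr μ Z i :=
  integral_eq_measureReal_of_forall_eq_zero_or_one (hZmeas i) (hZ01 · i)

lemma sum_Pr_mSet [IsProbabilityMeasure μ] (hZmeas : ∀ i, Measurable fun ω => Z ω i)
    (hZ01 : ∀ ω i, Z ω i = 0 ∨ Z ω i = 1)
    (hZsum : ∀ᵐ ω ∂μ, ∀ s, ∑ i ∈ mSet m s, Z ω i = (nT s : ℝ)) (s : S) :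
    ∑ i ∈ mSet m s, Pr μ Z i = nT s := by
  have hint i : Integrable (fun ω => Z ω i) μ :=
    integrable_of_forall_eq_zero_or_one (hZmeas i) (hZ01 · i)
  calc ∑ i ∈ mSet m s, Pr μ Z i = ∫ ω, ∑ i ∈ mSet m s, Z ω i ∂μ := by
        rw [integral_finsetSum _ fun i _ => hint i]
        exact Finset.sum_congr rfl fun i _ => (integral_eq_Pr μ hZmeas hZ01 i).symm
    _ = ∫ _, (nT s : ℝ) ∂μ := integral_congr_ae (hZsum.mono fun ω h => h s)
    _ = nT s := by simp

lemma Pr_eq_of_perfect [IsProbabilityMeasure μ] (hZmeas : ∀ i, Measurable fun ω => Z ω i)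
    (hZ01 : ∀ ω i, Z ω i = 0 ∨ Z ω i = 1)
    (hZsum : ∀ᵐ ω ∂μ, ∀ s, ∑ i ∈ mSet m s, Z ω i = (nT s : ℝ))
    (hperf : ∀ i j, m i = m j → Pr μ Z i = Pr μ Z j) (i : Fin n) :
    Pr μ Z i = nT (m i) / (mSet m (m i)).card := by
  have hi : i ∈ mSet m (m i) := by simp [mSet]
  have hsum := sum_Pr_mSet m nT μ hZmeas hZ01 hZsum (m i)
  rw [Finset.sum_congr rfl fun j hj => hperf j i (by simpa [mSet] using hj), sum_const,
    nsmul_eq_mul] at hsum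
  rw [← hsum, mul_div_cancel_left₀ _ (by exact_mod_cast (card_pos.2 ⟨i, hi⟩).ne')]

end Propensity

lemma residual_term_eq_effect {a b : ℝ} (ha : 0 ≤ a) (hb : 0 < b) (T x y z : ℝ) :
    a / (a + b) * (a / T / a * (x - z)) - (1 - a / (a + b)) * (a / T / b * (y - z))
      = (x - y) * (a / (a + b)) / T := by
  rcases ha.eq_or_lt with rfl | ha
  · simp
  · field_simp
    ring

end Rebar

open Rebar in
theorem stmt8_general {n : ℕ} {S : Type*} [Fintype S] [DecidableEq S]
    (m : Fin n → S) (nT nC : S → ℕ)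
    (hC : ∀ s, 0 < nC s)
    (hsize : ∀ s, nT s + nC s = (Rebar.mSet m s).card)
    {Ω : Type*} [MeasurableSpace Ω] (μ : Measure Ω) [IsProbabilityMeasure μ]
    (Z : Ω → Fin n → ℝ)
    (hZmeas : ∀ i, Measurable fun ω => Z ω i)
    (hZ01 : ∀ ω i, Z ω i = 0 ∨ Z ω i = 1)
    (hZsum : ∀ᵐ ω ∂μ, ∀ s, ∑ i ∈ Rebar.mSet m s, Z ω i = (nT s : ℝ))
    (hperf : ∀ i j, m i = m j → Rebar.Pr μ Z i = Rebar.Pr μ Z j)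
    (yT yC yhat : Fin n → ℝ) :
    ∫ ω, Rebar.tauM m nT nC
        (fun i => Rebar.Yobs yT yC (Z ω) i - yhat i) (Z ω) ∂μ
      = Rebar.tauETT μ Z yT yC nT := by
  have hP i : Pr μ Z i = nT (m i) / (nT (m i) + nC (m i) : ℝ) := by
    rw [Pr_eq_of_perfect m nT μ hZmeas hZ01 hZsum hperf, ← hsize, Nat.cast_add]
  have hint i : Integrable (fun ω => Z ω i) μ :=
    integrable_of_forall_eq_zero_or_one (hZmeas i) (hZ01 · i)
  calc _ = ∫ ω, ∑ i, (Z ω i * (w nT (m i) / nT (m i) * (yT i - yhat i))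
          - (1 - Z ω i) * (w nT (m i) / nC (m i) * (yC i - yhat i))) ∂μ := by
        simp only [tauM_residual_eq m nT nC yT yC yhat _ (hZ01 _)]
    _ = ∑ i, (Pr μ Z i * (w nT (m i) / nT (m i) * (yT i - yhat i))
          - (1 - Pr μ Z i) * (w nT (m i) / nC (m i) * (yC i - yhat i))) := by
        rw [integral_finsetSum _ fun i _ => ?_]
        · simp only [integral_mul_sub_one_sub_mul (hint _), integral_eq_Pr μ hZmeas hZ01]
        · exact (hint i).mul_const _ |>.sub (((integrable_const 1).sub (hint i)).mul_const _)
    _ = ∑ i, (yT i - yC i) * Pr μ Z i / nTtot nT :=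
        Finset.sum_congr rfl fun i _ => by
          rw [hP, w]
          exact residual_term_eq_effect (Nat.cast_nonneg _) (by exact_mod_cast hC _) _ _ _ _
    _ = tauETT μ Z yT yC nT := by rw [tauETT, sum_div]

/-- Proposition 2: Under perfect matching, the rebar estimator
is unbiased for the expected effect of the treatment on the treated:
`E[τ̂_rebar] = τ_ETT`. -/
theorem stmt8 {n : ℕ} {S : Type*} [Fintype S] [DecidableEq S] [Nonempty S]
    (m : Fin n → S) (nT nC : S → ℕ)
    (hT : ∀ s, 0 < nT s) (hC : ∀ s, 0 < nC s)
    (hsize : ∀ s, nT s + nC s = (Rebar.mSet m s).card)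
    {Ω : Type*} [MeasurableSpace Ω] (μ : Measure Ω) [IsProbabilityMeasure μ]
    (Z : Ω → Fin n → ℝ)
    (hZmeas : ∀ i, Measurable fun ω => Z ω i)
    (hZ01 : ∀ ω i, Z ω i = 0 ∨ Z ω i = 1)
    (hZsum : ∀ᵐ ω ∂μ, ∀ s, ∑ i ∈ Rebar.mSet m s, Z ω i = (nT s : ℝ))
    (hperf : ∀ i j, m i = m j → Rebar.Pr μ Z i = Rebar.Pr μ Z j)
    (yT yC yhat : Fin n → ℝ) :
    ∫ ω, Rebar.tauM m nT nC
        (fun i => Rebar.Yobs yT yC (Z ω) i - yhat i) (Z ω) ∂μ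
      = Rebar.tauETT μ Z yT yC nT :=
  stmt8_general m nT nC hC hsize μ Z hZmeas hZ01 hZsum hperf yT yC yhat
end
end

section
/- The bias of the rebar estimator equals the prediction-error analogue of the matching-estimator bias formula: E[τ̂_rebar] − τ_ETT = Σ_{s∈S} w_s · Σ_{i : m(i)=s} (y_C(i) − ŷ_C(i))·(P_i/n_T(s) − (1−P_i)/n_C(s)). -/
/-! On a {0,1}-valued assignment the residual `Y_i - ŷ_C(i)` is `y_T(i) - ŷ_C(i)` on treated and
`y_C(i) - ŷ_C(i)` on control units, so `τ̂_rebar` is affine in `Z` and its expectation is obtained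
by substituting `P_i = E[Z_i]` for `Z_i`. Subtracting `τ_ETT`, the treated outcomes `y_T(i)` cancel
because `w_s / n_T(s) = 1 / n_T`. -/

open MeasureTheory Finset

noncomputable section

section ZeroOne

variable {Ω : Type*} [MeasurableSpace Ω] (μ : Measure Ω)

theorem integral_eq_measureReal_of_zero_or_one {X : Ω → ℝ} (hX : Measurable X)
    (h01 : ∀ ω, X ω = 0 ∨ X ω = 1) :
    ∫ ω, X ω ∂μ = μ.real {ω | X ω = 1} := by
  have hind : X = Set.indicator {ω | X ω = 1} fun _ => 1 := by
    funext ω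
    rcases h01 ω with h | h <;> simp [Set.indicator, h]
  conv_lhs => rw [hind]
  have h := integral_indicator_const (μ := μ) (1 : ℝ) (hX (measurableSet_singleton 1))
  rw [smul_eq_mul, mul_one] at h
  exact h

theorem integrable_of_zero_or_one [IsFiniteMeasure μ] {X : Ω → ℝ} (hX : Measurable X)
    (h01 : ∀ ω, X ω = 0 ∨ X ω = 1) : Integrable X μ :=
  Integrable.of_bound hX.aestronglyMeasurable 1 <| ae_of_all _ fun ω => by
    rcases h01 ω with h | h <;> simp [h]

end ZeroOne

namespace Rebar

variable {n : ℕ} {S : Type*} [DecidableEq S]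

/-- `t_s` with the treated terms read from `u` and the control terms from `v`; unlike `tdiff`
applied to observed outcomes, it is affine in the assignment `z`. -/
def tdiffPot (m : Fin n → S) (nT nC : S → ℕ) (u v z : Fin n → ℝ) (s : S) : ℝ :=
  (1 / (nT s : ℝ)) * ∑ i ∈ mSet m s, u i * z i
    - (1 / (nC s : ℝ)) * ∑ i ∈ mSet m s, v i * (1 - z i)

theorem tdiff_residual_eq_tdiffPot (m : Fin n → S) (nT nC : S → ℕ) (yT yC yhat z : Fin n → ℝ)
    (hz : ∀ i, z i = 0 ∨ z i = 1) (s : S) :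
    tdiff m nT nC (fun i => Yobs yT yC z i - yhat i) z s
      = tdiffPot m nT nC (fun i => yT i - yhat i) (fun i => yC i - yhat i) z s := by
  have hterm : ∀ i, (Yobs yT yC z i - yhat i) * z i = (yT i - yhat i) * z i ∧
      (Yobs yT yC z i - yhat i) * (1 - z i) = (yC i - yhat i) * (1 - z i) := by
    intro i
    rcases hz i with h | h <;> simp [Yobs, h]
  simp only [tdiff, tdiffPot, fun i => (hterm i).1, fun i => (hterm i).2]

theorem tauM_residual_eq_sum_tdiffPot [Fintype S] (m : Fin n → S) (nT nC : S → ℕ)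
    (yT yC yhat z : Fin n → ℝ) (hz : ∀ i, z i = 0 ∨ z i = 1) :
    tauM m nT nC (fun i => Yobs yT yC z i - yhat i) z
      = ∑ s, w nT s * tdiffPot m nT nC (fun i => yT i - yhat i) (fun i => yC i - yhat i) z s := by
  simp only [tauM, tdiff_residual_eq_tdiffPot m nT nC yT yC yhat z hz]

section Expectation

variable {Ω : Type*} [MeasurableSpace Ω] (μ : Measure Ω)

theorem integrable_tdiffPot [IsFiniteMeasure μ] (m : Fin n → S) (nT nC : S → ℕ)
    (u v : Fin n → ℝ) {Z : Ω → Fin n → ℝ} (hZ : ∀ i, Integrable (fun ω => Z ω i) μ) (s : S) :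
    Integrable (fun ω => tdiffPot m nT nC u v (Z ω) s) μ := by
  unfold tdiffPot
  fun_prop

theorem integral_tdiffPot [IsProbabilityMeasure μ] (m : Fin n → S) (nT nC : S → ℕ)
    (u v : Fin n → ℝ) {Z : Ω → Fin n → ℝ} (hZ : ∀ i, Integrable (fun ω => Z ω i) μ) (s : S) :
    ∫ ω, tdiffPot m nT nC u v (Z ω) s ∂μ
      = tdiffPot m nT nC u v (fun i => ∫ ω, Z ω i ∂μ) s := by
  have hcompl : ∀ i, Integrable (fun ω => 1 - Z ω i) μ := fun i => (integrable_const 1).sub (hZ i)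
  unfold tdiffPot
  rw [integral_sub (by fun_prop) (by fun_prop), integral_const_mul, integral_const_mul,
    integral_finsetSum _ fun i _ => (hZ i).const_mul _,
    integral_finsetSum _ fun i _ => (hcompl i).const_mul _]
  simp only [integral_const_mul, integral_sub (integrable_const 1) (hZ _), integral_const,
    probReal_univ, smul_eq_mul, one_mul]

theorem integral_sum_mul_tdiffPot [Fintype S] [IsProbabilityMeasure μ] (m : Fin n → S)
    (nT nC : S → ℕ) (c : S → ℝ) (u v : Fin n → ℝ) {Z : Ω → Fin n → ℝ}
    (hZ : ∀ i, Integrable (fun ω => Z ω i) μ) :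
    ∫ ω, ∑ s, c s * tdiffPot m nT nC u v (Z ω) s ∂μ
      = ∑ s, c s * tdiffPot m nT nC u v (fun i => ∫ ω, Z ω i ∂μ) s := by
  rw [integral_finsetSum _ fun s _ => (integrable_tdiffPot μ m nT nC u v hZ s).const_mul _]
  simp only [integral_const_mul, integral_tdiffPot μ m nT nC u v hZ]

end Expectation

theorem sum_w_mul_tdiffPot_sub_div_nTtot [Fintype S] (m : Fin n → S) (nT nC : S → ℕ)
    (hT : ∀ s, 0 < nT s) (yT yC yhat p : Fin n → ℝ) :
    ∑ s, w nT s * tdiffPot m nT nC (fun i => yT i - yhat i) (fun i => yC i - yhat i) p s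
        - (∑ i, (yT i - yC i) * p i) / (nTtot nT : ℝ)
      = ∑ s, w nT s * ∑ i ∈ mSet m s, (yC i - yhat i) *
          (p i / (nT s : ℝ) - (1 - p i) / (nC s : ℝ)) := by
  rw [← sum_fiberwise univ m fun i => (yT i - yC i) * p i, sum_div, ← sum_sub_distrib]
  refine sum_congr rfl fun s _ => ?_
  have hw : w nT s * (1 / (nT s : ℝ)) = 1 / (nTtot nT : ℝ) := by
    have := (hT s).ne'
    rw [w]
    field_simp
  change _ - (∑ i ∈ mSet m s, _) / _ = _
  simp only [tdiffPot, mul_sub, mul_sum, sum_div, ← sum_sub_distrib]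
  refine sum_congr rfl fun i _ => ?_
  linear_combination ((yT i - yC i) * p i) * hw

end Rebar

theorem stmt9_general {n : ℕ} {S : Type*} [Fintype S] [DecidableEq S]
    (m : Fin n → S) (nT nC : S → ℕ)
    (hT : ∀ s, 0 < nT s)
    {Ω : Type*} [MeasurableSpace Ω] (μ : Measure Ω) [IsProbabilityMeasure μ]
    (Z : Ω → Fin n → ℝ)
    (hZmeas : ∀ i, Measurable fun ω => Z ω i)
    (hZ01 : ∀ ω i, Z ω i = 0 ∨ Z ω i = 1)
    (yT yC yhat : Fin n → ℝ) :
    (∫ ω, Rebar.tauM m nT nC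
          (fun i => Rebar.Yobs yT yC (Z ω) i - yhat i) (Z ω) ∂μ)
        - Rebar.tauETT μ Z yT yC nT
      = ∑ s, Rebar.w nT s *
          ∑ i ∈ Rebar.mSet m s, (yC i - yhat i) *
            (Rebar.Pr μ Z i / (nT s : ℝ) - (1 - Rebar.Pr μ Z i) / (nC s : ℝ)) := by
  have hZint : ∀ i, Integrable (fun ω => Z ω i) μ := fun i =>
    integrable_of_zero_or_one μ (hZmeas i) (hZ01 · i)
  have hP : (fun i => ∫ ω, Z ω i ∂μ) = Rebar.Pr μ Z := funext fun i =>
    integral_eq_measureReal_of_zero_or_one μ (hZmeas i) (hZ01 · i)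
  simp only [Rebar.tauM_residual_eq_sum_tdiffPot m nT nC yT yC yhat _ (hZ01 _)]
  rw [Rebar.integral_sum_mul_tdiffPot μ m nT nC _ _ _ hZint, hP, Rebar.tauETT]
  exact Rebar.sum_w_mul_tdiffPot_sub_div_nTtot m nT nC hT yT yC yhat _

/-- The bias of the rebar estimator equals the prediction-error
analogue of the matching-estimator bias formula:
`E[τ̂_rebar] - τ_ETT
  = Σ_s w_s Σ_{i : m(i)=s} (y_C(i) - ŷ_C(i)) (P_i/n_T(s) - (1-P_i)/n_C(s))`. -/
theorem stmt9 {n : ℕ} {S : Type*} [Fintype S] [DecidableEq S] [Nonempty S]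
    (m : Fin n → S) (nT nC : S → ℕ)
    (hT : ∀ s, 0 < nT s) (hC : ∀ s, 0 < nC s)
    (hsize : ∀ s, nT s + nC s = (Rebar.mSet m s).card)
    {Ω : Type*} [MeasurableSpace Ω] (μ : Measure Ω) [IsProbabilityMeasure μ]
    (Z : Ω → Fin n → ℝ)
    (hZmeas : ∀ i, Measurable fun ω => Z ω i)
    (hZ01 : ∀ ω i, Z ω i = 0 ∨ Z ω i = 1)
    (hZsum : ∀ᵐ ω ∂μ, ∀ s, ∑ i ∈ Rebar.mSet m s, Z ω i = (nT s : ℝ))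
    (yT yC yhat : Fin n → ℝ) :
    (∫ ω, Rebar.tauM m nT nC
          (fun i => Rebar.Yobs yT yC (Z ω) i - yhat i) (Z ω) ∂μ)
        - Rebar.tauETT μ Z yT yC nT
      = ∑ s, Rebar.w nT s *
          ∑ i ∈ Rebar.mSet m s, (yC i - yhat i) *
            (Rebar.Pr μ Z i / (nT s : ℝ) - (1 - Rebar.Pr μ Z i) / (nC s : ℝ)) :=
  stmt9_general m nT nC hT μ Z hZmeas hZ01 yT yC yhat
end
end

section
/- (Proposition 3, R² form.) If Σ_{i=1}^n (y_C(i) − ȳ_C)² > 0, then the squared bias of the rebar estimator, standardized by the sample standard deviation of the control potential outcomes, satisfies ((E[τ̂_rebar] − τ_ETT)/SD(y_C))² ≤ (1 − R²_M) · C(n, n_T, n_C). -/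
open MeasureTheory Finset

noncomputable section

/-! The rebar estimator is linear in the residual vector, and the weight it gives subject `i` is an
affine function of `Z_i`. Since the effect part `Z_i τ_i` of a residual is weighted by exactly
`1/n_T` when `Z_i = 1`, its expectation is `τ_ETT`, and the bias is `Σ_i c_i (y_C(i) - ŷ_C(i))`
with `c_i` the weight evaluated at `P_i`. As a convex combination of `1` and `-n_T(s)/n_C(s)`
divided by `n_T`, each `|c_i|` is at most `max(1, n_T(s)/n_C(s))/n_T`, and Cauchy–Schwarz
gives the bound. -/

namespace Rebar

section Weights

variable {n : ℕ} {S : Type*} [Fintype S]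

/-- The weight `τ̂_M(v)` puts on `v i` when `m i = s` and `z i = p`. -/
def subjectWeight (nT nC : S → ℕ) (s : S) (p : ℝ) : ℝ :=
  w nT s * (p / nT s - (1 - p) / nC s)

lemma subjectWeight_eq_affine (nT nC : S → ℕ) (s : S) (p : ℝ) :
    subjectWeight nT nC s p = (1 - p) * subjectWeight nT nC s 0 + p * subjectWeight nT nC s 1 := by
  simp only [subjectWeight]
  ring

lemma subjectWeight_one (nT nC : S → ℕ) {s : S} (hs : nT s ≠ 0) :
    subjectWeight nT nC s 1 = 1 / nTtot nT := by
  rw [subjectWeight, w, sub_self, zero_div, sub_zero, div_mul_eq_mul_div,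
    mul_one_div_cancel (Nat.cast_ne_zero.2 hs)]

lemma abs_sub_mul_one_sub_le_max {p r : ℝ} (hp0 : 0 ≤ p) (hp1 : p ≤ 1) (hr : 0 ≤ r) :
    |p - r * (1 - p)| ≤ max 1 r := by
  rw [abs_le]
  constructor <;> nlinarith [le_max_left 1 r, le_max_right 1 r]

lemma sq_subjectWeight_le (nT nC : S → ℕ) {s : S} (hs : nT s ≠ 0) {p : ℝ}
    (hp0 : 0 ≤ p) (hp1 : p ≤ 1) :
    subjectWeight nT nC s p ^ 2 ≤ max 1 ((nT s : ℝ) / nC s) ^ 2 / (nTtot nT : ℝ) ^ 2 := by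
  have hsw : subjectWeight nT nC s p = (p - (nT s : ℝ) / nC s * (1 - p)) / nTtot nT := by
    rw [subjectWeight, w, div_mul_eq_mul_div]
    congr 1
    field_simp
  rw [hsw, div_pow]
  refine div_le_div_of_nonneg_right (sq_le_sq.2 ?_) (sq_nonneg _)
  exact (abs_sub_mul_one_sub_le_max hp0 hp1 (by positivity)).trans (le_abs_self _)

variable [DecidableEq S]

lemma tauM_eq_sum_subjectWeight (m : Fin n → S) (nT nC : S → ℕ) (v z : Fin n → ℝ) :
    tauM m nT nC v z = ∑ i, subjectWeight nT nC (m i) (z i) * v i := by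
  rw [tauM, ← Finset.sum_fiberwise univ m]
  refine sum_congr rfl fun s _ => ?_
  rw [tdiff, mSet, mul_sub, mul_sum, mul_sum, mul_sum, mul_sum, ← sum_sub_distrib]
  refine sum_congr rfl fun i hi => ?_
  rw [(mem_filter.1 hi).2, subjectWeight]
  ring

lemma sum_comp_eq_sum_card_mul (m : Fin n → S) (f : S → ℝ) :
    ∑ i, f (m i) = ∑ s, ((mSet m s).card : ℝ) * f s := by
  rw [← Finset.sum_fiberwise univ m]
  refine sum_congr rfl fun s _ => ?_
  rw [← nsmul_eq_mul, ← sum_const, mSet]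
  exact sum_congr rfl fun i hi => by rw [(mem_filter.1 hi).2]

lemma Cdesign_eq_sum (m : Fin n → S) (nT nC : S → ℕ)
    (hsize : ∀ s, nT s + nC s = (mSet m s).card) :
    Cdesign n nT nC = n / (nTtot nT : ℝ) ^ 2 * ∑ i, max 1 ((nT (m i) : ℝ) / nC (m i)) ^ 2 := by
  rw [Cdesign, sum_comp_eq_sum_card_mul m fun s => max 1 ((nT s : ℝ) / nC s) ^ 2]
  simp only [← hsize, Nat.cast_add]

theorem natCast_mul_sq_sum_subjectWeight_mul_le (m : Fin n → S) (nT nC : S → ℕ)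
    (hT : ∀ s, nT s ≠ 0) (hsize : ∀ s, nT s + nC s = (mSet m s).card)
    {p : Fin n → ℝ} (hp0 : ∀ i, 0 ≤ p i) (hp1 : ∀ i, p i ≤ 1) (d : Fin n → ℝ) :
    n * (∑ i, subjectWeight nT nC (m i) (p i) * d i) ^ 2 ≤ Cdesign n nT nC * ∑ i, d i ^ 2 := by
  have hcoeff : ∑ i, subjectWeight nT nC (m i) (p i) ^ 2
      ≤ ∑ i, max 1 ((nT (m i) : ℝ) / nC (m i)) ^ 2 / (nTtot nT : ℝ) ^ 2 :=
    sum_le_sum fun i _ => sq_subjectWeight_le nT nC (hT (m i)) (hp0 i) (hp1 i)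
  calc n * (∑ i, subjectWeight nT nC (m i) (p i) * d i) ^ 2
      ≤ n * ((∑ i, subjectWeight nT nC (m i) (p i) ^ 2) * ∑ i, d i ^ 2) := by
        gcongr
        exact sum_mul_sq_le_sq_mul_sq _ _ _
    _ ≤ n * ((∑ i, max 1 ((nT (m i) : ℝ) / nC (m i)) ^ 2 / (nTtot nT : ℝ) ^ 2) * ∑ i, d i ^ 2) := by
        gcongr
    _ = Cdesign n nT nC * ∑ i, d i ^ 2 := by
        rw [Cdesign_eq_sum m nT nC hsize, ← sum_div]
        ring

end Weights

section Expectation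

variable {n : ℕ} {Ω : Type*} {Z : Ω → Fin n → ℝ} {i : Fin n}

lemma coord_eq_indicator (h01 : ∀ ω, Z ω i = 0 ∨ Z ω i = 1) :
    (fun ω => Z ω i) = {ω | Z ω i = 1}.indicator 1 := by
  funext ω
  rcases h01 ω with h | h <;> simp [h]

lemma comp_eq_affine_of_binary (h01 : ∀ ω, Z ω i = 0 ∨ Z ω i = 1) (f : ℝ → ℝ) :
    (fun ω => f (Z ω i)) = fun ω => f 0 + (f 1 - f 0) * Z ω i := by
  funext ω
  rcases h01 ω with h | h <;> simp [h]

variable [MeasurableSpace Ω] {μ : Measure Ω}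

lemma Pr_nonneg : 0 ≤ Pr μ Z i := ENNReal.toReal_nonneg

lemma Pr_le_one [IsProbabilityMeasure μ] : Pr μ Z i ≤ 1 := measureReal_le_one

variable (hmeas : Measurable fun ω => Z ω i) (h01 : ∀ ω, Z ω i = 0 ∨ Z ω i = 1)
include hmeas h01

lemma integral_coord : ∫ ω, Z ω i ∂μ = Pr μ Z i := by
  have hset : MeasurableSet {ω | Z ω i = 1} := hmeas (measurableSet_singleton 1)
  rw [coord_eq_indicator h01, integral_indicator_one hset]
  rfl

lemma integrable_coord [IsFiniteMeasure μ] : Integrable (fun ω => Z ω i) μ := by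
  rw [coord_eq_indicator h01]
  exact (integrable_const 1).indicator (hmeas (measurableSet_singleton 1))

lemma integrable_comp_of_binary [IsFiniteMeasure μ] (f : ℝ → ℝ) :
    Integrable (fun ω => f (Z ω i)) μ := by
  rw [comp_eq_affine_of_binary h01]
  exact (integrable_const _).add ((integrable_coord hmeas h01).const_mul _)

lemma integral_comp_of_binary [IsProbabilityMeasure μ] (f : ℝ → ℝ) :
    ∫ ω, f (Z ω i) ∂μ = (1 - Pr μ Z i) * f 0 + Pr μ Z i * f 1 := by
  rw [comp_eq_affine_of_binary h01, integral_add (integrable_const _)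
    ((integrable_coord hmeas h01).const_mul _), integral_const_mul, integral_coord hmeas h01,
    integral_const, probReal_univ, one_smul]
  ring

end Expectation

theorem integral_tauM_residual_sub_tauETT {n : ℕ} {S : Type*} [Fintype S] [DecidableEq S]
    {Ω : Type*} [MeasurableSpace Ω] {μ : Measure Ω} [IsProbabilityMeasure μ]
    {Z : Ω → Fin n → ℝ} (m : Fin n → S) (nT nC : S → ℕ) (hT : ∀ s, nT s ≠ 0)
    (hmeas : ∀ i, Measurable fun ω => Z ω i) (h01 : ∀ ω i, Z ω i = 0 ∨ Z ω i = 1)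
    (yT yC yhat : Fin n → ℝ) :
    (∫ ω, tauM m nT nC (fun i => Yobs yT yC (Z ω) i - yhat i) (Z ω) ∂μ) - tauETT μ Z yT yC nT
      = ∑ i, subjectWeight nT nC (m i) (Pr μ Z i) * (yC i - yhat i) := by
  set g : Fin n → ℝ → ℝ :=
    fun i p => subjectWeight nT nC (m i) p * (p * yT i + (1 - p) * yC i - yhat i)
  have hpointwise : ∀ ω, tauM m nT nC (fun i => Yobs yT yC (Z ω) i - yhat i) (Z ω)
      = ∑ i, g i (Z ω i) :=
    fun ω => tauM_eq_sum_subjectWeight m nT nC _ _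
  rw [integral_congr_ae (ae_of_all μ hpointwise),
    integral_finsetSum _ fun i _ => integrable_comp_of_binary (hmeas i) (fun ω => h01 ω i) (g i),
    tauETT, sum_div, ← sum_sub_distrib]
  refine sum_congr rfl fun i _ => ?_
  rw [integral_comp_of_binary (hmeas i) (fun ω => h01 ω i)]
  simp only [g]
  rw [subjectWeight_eq_affine nT nC (m i) (Pr μ Z i), subjectWeight_one nT nC (hT (m i))]
  ring

end Rebar

theorem stmt13_general {n : ℕ} {S : Type*} [Fintype S] [DecidableEq S]
    (m : Fin n → S) (nT nC : S → ℕ)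
    (hT : ∀ s, 0 < nT s)
    (hsize : ∀ s, nT s + nC s = (Rebar.mSet m s).card)
    {Ω : Type*} [MeasurableSpace Ω] (μ : Measure Ω) [IsProbabilityMeasure μ]
    (Z : Ω → Fin n → ℝ)
    (hZmeas : ∀ i, Measurable fun ω => Z ω i)
    (hZ01 : ∀ ω i, Z ω i = 0 ∨ Z ω i = 1)
    (yT yC yhat : Fin n → ℝ)
    (hvar : 0 < ∑ i, (yC i - (1 / (n : ℝ)) * ∑ j, yC j) ^ 2) :
    (((∫ ω, Rebar.tauM m nT nC
            (fun i => Rebar.Yobs yT yC (Z ω) i - yhat i) (Z ω) ∂μ)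
          - Rebar.tauETT μ Z yT yC nT)
        / Real.sqrt ((1 / (n : ℝ)) *
            ∑ i, (yC i - (1 / (n : ℝ)) * ∑ j, yC j) ^ 2)) ^ 2
      ≤ (1 - (1 - (∑ i, (yC i - yhat i) ^ 2)
                    / ∑ i, (yC i - (1 / (n : ℝ)) * ∑ j, yC j) ^ 2))
          * Rebar.Cdesign n nT nC := by
  have hT' : ∀ s, nT s ≠ 0 := fun s => (hT s).ne'
  rw [Rebar.integral_tauM_residual_sub_tauETT m nT nC hT' hZmeas hZ01]
  set Q := ∑ i, (yC i - (1 / (n : ℝ)) * ∑ j, yC j) ^ 2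
  set bias := ∑ i, Rebar.subjectWeight nT nC (m i) (Rebar.Pr μ Z i) * (yC i - yhat i)
  have hbias : n * bias ^ 2 ≤ Rebar.Cdesign n nT nC * ∑ i, (yC i - yhat i) ^ 2 :=
    Rebar.natCast_mul_sq_sum_subjectWeight_mul_le m nT nC hT' hsize
      (fun _ => Rebar.Pr_nonneg) (fun _ => Rebar.Pr_le_one) _
  have hsd : 0 ≤ 1 / (n : ℝ) * Q := by positivity
  calc (bias / Real.sqrt (1 / (n : ℝ) * Q)) ^ 2 = n * bias ^ 2 / Q := by
        rw [div_pow, Real.sq_sqrt hsd]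
        field_simp
    _ ≤ Rebar.Cdesign n nT nC * (∑ i, (yC i - yhat i) ^ 2) / Q := by gcongr
    _ = _ := by ring

/-- Proposition 3, R² form: if `Σ_i (y_C(i) - ȳ_C)² > 0` then
`((E[τ̂_rebar] - τ_ETT)/SD(y_C))² ≤ (1 - R²_M) · C(n, n_T, n_C)`. -/
theorem stmt13 {n : ℕ} {S : Type*} [Fintype S] [DecidableEq S] [Nonempty S]
    (m : Fin n → S) (nT nC : S → ℕ)
    (hT : ∀ s, 0 < nT s) (hC : ∀ s, 0 < nC s)
    (hsize : ∀ s, nT s + nC s = (Rebar.mSet m s).card)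
    {Ω : Type*} [MeasurableSpace Ω] (μ : Measure Ω) [IsProbabilityMeasure μ]
    (Z : Ω → Fin n → ℝ)
    (hZmeas : ∀ i, Measurable fun ω => Z ω i)
    (hZ01 : ∀ ω i, Z ω i = 0 ∨ Z ω i = 1)
    (hZsum : ∀ᵐ ω ∂μ, ∀ s, ∑ i ∈ Rebar.mSet m s, Z ω i = (nT s : ℝ))
    (yT yC yhat : Fin n → ℝ)
    (hvar : 0 < ∑ i, (yC i - (1 / (n : ℝ)) * ∑ j, yC j) ^ 2) :
    (((∫ ω, Rebar.tauM m nT nC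
            (fun i => Rebar.Yobs yT yC (Z ω) i - yhat i) (Z ω) ∂μ)
          - Rebar.tauETT μ Z yT yC nT)
        / Real.sqrt ((1 / (n : ℝ)) *
            ∑ i, (yC i - (1 / (n : ℝ)) * ∑ j, yC j) ^ 2)) ^ 2
      ≤ (1 - (1 - (∑ i, (yC i - yhat i) ^ 2)
                    / ∑ i, (yC i - (1 / (n : ℝ)) * ∑ j, yC j) ^ 2))
          * Rebar.Cdesign n nT nC :=
  stmt13_general m nT nC hT hsize μ Z hZmeas hZ01 yT yC yhat hvar
end
end
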